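/- If w is a non-empty finite word and a, b are distinct letters such that both wa and wb are factors of the infinite fixed point m^ω(0), then a and b are consecutive modulo 5, i.e., a ≡ b+1 (mod 5) or b ≡ a+1 (mod 5). -/

import Mathlib

/-- `t` occurs at position `n` in the infinite word `w`. -/
def OccursAt {A : Type*} (t : List A) (w : ℕ → A) (n : ℕ) : Prop :=
  ∀ i, (h : i < t.length) → w (n + i) = t.get ⟨i, h⟩

/-- `t` is a factor of the infinite word `w`. -/
def IsFactor {A : Type*} (t : List A) (w : ℕ → A) : Prop :=
  ∃ n, OccursAt t w n

/-- The common prefix of length 48 of the images of `m`. -/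
def cword : List (Fin 5) := [0,2,4,1,3,0,1,2,4,0,2,3,0,1,3,0,2,4,1,3,4,1,2,4,0,2,3,4,1,3,0,2,4,1,3,4,1,2,4,0,2,3,0,1,3,0,2,4]

/-- The 95-uniform morphism `m`. -/
def m : Fin 5 → List (Fin 5) :=
  ![cword ++ [1,3,0,1,2,4,0,2,3,0,1,3,0,2,4,0,2,3,0,1,2,4,0,2,4,1,3,4,1,2,4,0,2,3,0,1,3,0,2,4,0,2,3,0,1,2,4],
    cword ++ [0,2,3,0,1,2,4,0,2,4,1,3,0,1,2,4,0,2,3,0,1,3,0,2,4,0,2,3,4,1,2,4,0,2,4,1,3,4,1,2,4,0,2,3,0,1,3],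
    cword ++ [0,2,3,4,1,2,4,0,2,4,1,3,0,1,2,4,0,2,3,4,1,3,0,2,4,1,3,0,1,2,4,0,2,3,0,1,3,0,2,4,0,2,3,0,1,2,4],
    cword ++ [1,3,0,1,2,4,0,2,3,0,1,3,0,2,4,0,2,3,0,1,2,4,0,2,4,1,3,4,1,2,4,0,2,3,0,1,3,0,2,4,0,2,3,4,1,2,4],
    cword ++ [0,2,3,4,1,2,4,0,2,4,1,3,0,1,2,4,0,2,3,0,1,3,0,2,4,0,2,3,4,1,2,4,0,2,4,1,3,4,1,2,4,0,2,3,0,1,3]]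


/-- The iterates `m^k(0)`. -/
def mIter : ℕ → List (Fin 5)
  | 0 => [0]
  | k + 1 => (mIter k).flatMap m

/-- The infinite fixed point `m^ω(0)`. Since `m(0)` starts with the letter `0`,
each `mIter k` is a prefix of `mIter (k+1)`, and `mIter (n+1)` has length
`95 ^ (n+1) > n`, so this is the limit word. -/
def mWord (n : ℕ) : Fin 5 := (mIter (n + 1)).getD n 0


/-- The allowed adjacency relation: the next letter is `c+1` or `c+2`. -/
def Rnext (c a : Fin 5) : Prop := a = c + 1 ∨ a = c + 2

instance : DecidableRel Rnext := fun c a =>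
  inferInstanceAs (Decidable (a = c + 1 ∨ a = c + 2))

set_option maxRecDepth 100000 in
lemma chain'_m : ∀ x : Fin 5, List.Chain' Rnext (m x) := by
  intro x
  unfold List.Chain'
  fin_cases x <;> decide

lemma head?_m : ∀ x : Fin 5, (m x).head? = some 0 := by decide

lemma last_m : ∀ x : Fin 5, ∀ u ∈ (m x).getLast?, Rnext u 0 := by decide

lemma length_m : ∀ x : Fin 5, (m x).length = 95 := by decide

lemma chain'_flatMap : ∀ l : List (Fin 5), List.Chain' Rnext (l.flatMap m)
  | [] => List.isChain_nil
  | x :: l => by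
    unfold List.Chain'
    rw [List.flatMap_cons, List.isChain_append]
    refine ⟨chain'_m x, chain'_flatMap l, ?_⟩
    intro u hu v hv
    cases l with
    | nil => simp at hv
    | cons y l' =>
      rw [List.flatMap_cons, List.head?_append_of_ne_nil _ (by
          intro h; have := head?_m y; rw [h] at this; simp at this),
        head?_m y] at hv
      cases hv
      exact last_m x u hu

lemma chain'_mIter (k : ℕ) : List.Chain' Rnext (mIter k) := by
  cases k with
  | zero => exact List.isChain_singleton 0
  | succ k => exact chain'_flatMap (mIter k)

lemma length_flatMap_m : ∀ l : List (Fin 5), (l.flatMap m).length = 95 * l.length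
  | [] => rfl
  | x :: l => by
    rw [List.flatMap_cons, List.length_append, length_flatMap_m l, length_m x,
      List.length_cons]
    ring

lemma length_mIter (k : ℕ) : (mIter k).length = 95 ^ k := by
  induction k with
  | zero => rfl
  | succ k ih =>
    show (List.flatMap m (mIter k)).length = _
    rw [length_flatMap_m, ih, pow_succ]
    ring

lemma mIter_prefix (k : ℕ) : mIter k <+: mIter (k + 1) := by
  induction k with
  | zero => decide
  | succ k ih =>
    obtain ⟨t, ht⟩ := ih
    exact ⟨t.flatMap m, by
      show (mIter k).flatMap m ++ t.flatMap m = (mIter (k+1)).flatMap m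
      rw [← List.flatMap_append, ht]⟩

lemma mIter_prefix_le {k k' : ℕ} (h : k ≤ k') : mIter k <+: mIter k' := by
  induction h with
  | refl => exact List.prefix_rfl
  | step _ ih => exact ih.trans (mIter_prefix _)

lemma lt_length_mIter (n : ℕ) : n < (mIter (n + 1)).length := by
  rw [length_mIter]
  calc n < 95 ^ n := Nat.lt_pow_self (by norm_num)
    _ ≤ 95 ^ (n + 1) := Nat.pow_le_pow_right (by norm_num) (Nat.le_succ n)

lemma mWord_eq (n k : ℕ) (h : n < (mIter k).length) :
    mWord n = (mIter k)[n] := by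
  rcases le_total (n + 1) k with hk | hk
  · have hp := mIter_prefix_le hk
    rw [mWord, List.getD_eq_getElem _ _ (lt_length_mIter n), hp.getElem (lt_length_mIter n)]
  · have hp := mIter_prefix_le hk
    rw [mWord, List.getD_eq_getElem _ _ (lt_length_mIter n)]
    exact (hp.getElem h).symm

lemma rnext_mWord (n : ℕ) : Rnext (mWord n) (mWord (n + 1)) := by
  have h1 : n + 1 < (mIter (n + 2)).length := lt_length_mIter (n + 1)
  have h0 : n < (mIter (n + 2)).length := Nat.lt_of_succ_lt h1
  rw [mWord_eq n (n + 2) h0, mWord_eq (n + 1) (n + 2) h1]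
  have := List.isChain_iff_getElem.mp (chain'_mIter (n + 2))
  have h2 : n + 1 < (mIter (n + 2)).length := by omega
  simpa using this n h2

lemma factor_rnext (w : List (Fin 5)) (a : Fin 5) (hw : w ≠ [])
    (ha : IsFactor (w ++ [a]) mWord) : Rnext (w.getLast hw) a := by
  obtain ⟨p, hp⟩ := ha
  have hlen : 0 < w.length := List.length_pos_iff.mpr hw
  have hc : mWord (p + (w.length - 1)) = w.getLast hw := by
    have h1 : w.length - 1 < (w ++ [a]).length := by
      rw [List.length_append, List.length_singleton]; omega
    have h2 : w.length - 1 < w.length := by omega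
    rw [hp (w.length - 1) h1, List.get_eq_getElem,
      List.getElem_append_left h2, List.getLast_eq_getElem]
  have hA : mWord (p + w.length) = a := by
    have h1 : w.length < (w ++ [a]).length := by
      rw [List.length_append, List.length_singleton]; omega
    rw [hp w.length h1, List.get_eq_getElem,
      List.getElem_concat_length rfl]
  have key := rnext_mWord (p + (w.length - 1))
  have he : p + (w.length - 1) + 1 = p + w.length := by omega
  rw [hc, he, hA] at key
  exact key

/-- If `wa` and `wb` are factors of `m^ω(0)` with `w` non-empty and `a ≠ b`,
then `a` and `b` are consecutive modulo 5. -/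
theorem mWord_right_extensions (w : List (Fin 5)) (a b : Fin 5)
    (hw : w ≠ []) (hab : a ≠ b)
    (ha : IsFactor (w ++ [a]) mWord) (hb : IsFactor (w ++ [b]) mWord) :
    a = b + 1 ∨ b = a + 1 := by
  have key : ∀ c a b : Fin 5, a ≠ b → Rnext c a → Rnext c b →
      a = b + 1 ∨ b = a + 1 := by decide
  exact key (w.getLast hw) a b hab (factor_rnext w a hw ha) (factor_rnext w b hw hb)
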